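/- Let C ⊆ F₂ = ⟨a,b⟩ be the set consisting of a^{±1}, a^{±2}, b^{±1}, (ab⁻¹a⁻¹b⁻¹)^{±1}, and (ab^n)^{±1}, (a⁻¹b^n)^{±1}, (ab^n a b^n)^{±1}, (a⁻¹b^n a⁻¹ b^n)^{±1} for all n ∈ ℤ. Let t_b be the automorphism a ↦ ab, b ↦ b. Then for every c ∈ C, t_b(c) is conjugate in F₂ to an element of C. -/

import Mathlib

/-- `a` and `b`, the generators of `F₂ = FreeGroup (Fin 2)`. -/
def a : FreeGroup (Fin 2) := FreeGroup.of 0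
def b : FreeGroup (Fin 2) := FreeGroup.of 1

/-- The class `C` of words representing simple closed curves on the punctured Klein
bottle, closed under inversion: `a^{±1}, a^{±2}, b^{±1}, (ab⁻¹a⁻¹b⁻¹)^{±1}`, and
`(abⁿ)^{±1}, (a⁻¹bⁿ)^{±1}, (abⁿabⁿ)^{±1}, (a⁻¹bⁿa⁻¹bⁿ)^{±1}` for `n ∈ ℤ`. -/
def C : Set (FreeGroup (Fin 2)) :=
  {w | w = a ∨ w = a⁻¹ ∨ w = a ^ 2 ∨ w = (a ^ 2)⁻¹ ∨ w = b ∨ w = b⁻¹ ∨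
    w = a * b⁻¹ * a⁻¹ * b⁻¹ ∨ w = (a * b⁻¹ * a⁻¹ * b⁻¹)⁻¹ ∨
    (∃ n : ℤ,
      w = a * b ^ n ∨ w = (a * b ^ n)⁻¹ ∨
      w = a⁻¹ * b ^ n ∨ w = (a⁻¹ * b ^ n)⁻¹ ∨
      w = a * b ^ n * a * b ^ n ∨ w = (a * b ^ n * a * b ^ n)⁻¹ ∨
      w = a⁻¹ * b ^ n * a⁻¹ * b ^ n ∨ w = (a⁻¹ * b ^ n * a⁻¹ * b ^ n)⁻¹)}

/-!
Since `t_b` fixes `b` and sends `a ↦ ab`, it sends `abⁿ ↦ abⁿ⁺¹` and `a⁻¹bⁿ ↦ b⁻¹a⁻¹bⁿ`, which is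
conjugate (by `b`) to `a⁻¹bⁿ⁻¹`; the same shifts of `n` handle `abⁿabⁿ` and `a⁻¹bⁿa⁻¹bⁿ`, while
`a ↦ ab`, `a² ↦ abab`, `b ↦ b`, and `ab⁻¹a⁻¹b⁻¹` is fixed. As homomorphisms commute with inversion,
it suffices to treat one word of each pair `c, c⁻¹`.
-/

theorem IsConj.inv {G : Type*} [Group G] {x y : G} (h : IsConj x y) : IsConj x⁻¹ y⁻¹ := by
  obtain ⟨c, rfl⟩ := isConj_iff.mp h
  exact isConj_iff.mpr ⟨c, conj_inv.symm⟩

theorem exists_isConj_map_union_inv {G : Type*} [Group G] (f : G →* G) {S : Set G}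
    (hS : ∀ c ∈ S, ∃ c' ∈ S, IsConj c' (f c)) :
    ∀ c ∈ S ∪ S⁻¹, ∃ c' ∈ S ∪ S⁻¹, IsConj c' (f c) := by
  rintro c (hc | hc)
  · obtain ⟨c', hc', h⟩ := hS c hc
    exact ⟨c', .inl hc', h⟩
  · obtain ⟨c', hc', h⟩ := hS c⁻¹ hc
    refine ⟨c'⁻¹, .inr (by simpa using hc'), ?_⟩
    simpa using h.inv

def C₀ : Set (FreeGroup (Fin 2)) :=
  {w | w = a ∨ w = a ^ 2 ∨ w = b ∨ w = a * b⁻¹ * a⁻¹ * b⁻¹ ∨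
    ∃ n : ℤ, w = a * b ^ n ∨ w = a⁻¹ * b ^ n ∨ w = a * b ^ n * a * b ^ n ∨
      w = a⁻¹ * b ^ n * a⁻¹ * b ^ n}

theorem C_eq_union_inv : C = C₀ ∪ C₀⁻¹ := by
  ext w
  simp only [C, C₀, Set.mem_union, Set.mem_inv, Set.mem_ofPred_eq, inv_eq_iff_eq_inv, exists_or]
  tauto

theorem exists_isConj_map_of_mem_C₀ (tb : FreeGroup (Fin 2) →* FreeGroup (Fin 2))
    (ha : tb a = a * b) (hb : tb b = b) :
    ∀ c ∈ C₀, ∃ c' ∈ C₀, IsConj c' (tb c) := by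
  rintro c (rfl | rfl | rfl | rfl | ⟨n, rfl | rfl | rfl | rfl⟩) <;>
    simp only [map_mul, map_inv, map_pow, map_zpow, ha, hb]
  · exact ⟨a * b ^ (1 : ℤ), .inr <| .inr <| .inr <| .inr ⟨1, .inl rfl⟩,
      isConj_iff.mpr ⟨1, by group⟩⟩
  · exact ⟨a * b ^ (1 : ℤ) * a * b ^ (1 : ℤ),
      .inr <| .inr <| .inr <| .inr ⟨1, .inr <| .inr <| .inl rfl⟩,
      isConj_iff.mpr ⟨1, by rw [sq]; group⟩⟩
  · exact ⟨b, .inr <| .inr <| .inl rfl, .refl b⟩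
  · exact ⟨a * b⁻¹ * a⁻¹ * b⁻¹, .inr <| .inr <| .inr <| .inl rfl,
      isConj_iff.mpr ⟨1, by group⟩⟩
  · exact ⟨a * b ^ (n + 1), .inr <| .inr <| .inr <| .inr ⟨n + 1, .inl rfl⟩,
      isConj_iff.mpr ⟨1, by group⟩⟩
  · exact ⟨a⁻¹ * b ^ (n - 1), .inr <| .inr <| .inr <| .inr ⟨n - 1, .inr <| .inl rfl⟩,
      isConj_iff.mpr ⟨b⁻¹, by group⟩⟩
  · exact ⟨a * b ^ (n + 1) * a * b ^ (n + 1),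
      .inr <| .inr <| .inr <| .inr ⟨n + 1, .inr <| .inr <| .inl rfl⟩,
      isConj_iff.mpr ⟨1, by group⟩⟩
  · exact ⟨a⁻¹ * b ^ (n - 1) * a⁻¹ * b ^ (n - 1),
      .inr <| .inr <| .inr <| .inr ⟨n - 1, .inr <| .inr <| .inr rfl⟩,
      isConj_iff.mpr ⟨b⁻¹, by group⟩⟩

/-- The Dehn twist `t_b : a ↦ ab, b ↦ b` preserves the class `C` up to conjugacy. -/
theorem stmt_15 (tb : FreeGroup (Fin 2) →* FreeGroup (Fin 2))
    (ha : tb a = a * b) (hb : tb b = b) :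
    ∀ c ∈ C, ∃ c' ∈ C, IsConj c' (tb c) := by
  rw [C_eq_union_inv]
  exact exists_isConj_map_union_inv tb (exists_isConj_map_of_mem_C₀ tb ha hb)
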